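/- Let f : X → Y be a morphism of varieties over a perfect field k of characteristic p > 0 such that the natural map O_Y → f_*O_X splits as a map of O_Y-modules. If X is globally F-regular, then Y is stably Frobenius D-split for every effective Cartier divisor D on Y. -/

import Mathlib

/- STATEMENT 1: If f : X → Y is a morphism of varieties over a perfect field of
characteristic p > 0 such that O_Y → f_*O_X splits, and X is globally F-regular,
then Y is stably Frobenius D-split for every effective Cartier divisor D on Y.

We formalize varieties with their Frobenius geometry abstractly (`FrobVariety`),
and a morphism f : X → Y by the data `FrobMorphism`: the pushforward functor
`pf = f_*`, the natural map `unit : O_Y → f_*O_X`, pullback of divisors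
`pull = f^*` preserving effectivity, and for each divisor D and e > 0 the
natural comparison `F^e_*O_Y(D) → f_*(F^e_*O_X(f^*D))` (via the projection
formula O_Y(D) ⊗ f_*O_X = f_*O_X(f^*D)), compatible with the Frobenius maps. -/

open CategoryTheory

universe u v u_1

/-- A morphism is split if it admits a retraction. -/
def IsSplitMor {C : Type u} [Category C] {A B : C} (u : A ⟶ B) : Prop :=
  ∃ r : B ⟶ A, u ≫ r = 𝟙 A

/-- Abstract data of a variety `X` over a perfect field of characteristic `p > 0`
together with its Frobenius geometry: `Sh` is the category of sheaves of
`O_X`-modules, `O` the structure sheaf, `Div` the (Weil) divisors on `X` with the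
effectivity and Cartier predicates, `FD D e` is the sheaf `F^e_* O_X(D)` and
`frob D e : O ⟶ FD D e` is the natural map `O_X → F^e_* O_X(D)`.
`iter` records that for the zero divisor, `O_X → F^e_*O_X` factors through
`O_X → F_*O_X` (iteration of Frobenius), and `normal`/`projective` record the
corresponding geometric properties of `X`. -/
structure FrobVariety where
  (Sh : Type u)
  [cat : Category.{u_1} Sh]
  (O : Sh)
  (Div : Type v)
  (eff : Div → Prop)
  (cartier : Div → Prop)
  (zero : Div)
  (eff_zero : eff zero)
  (FD : Div → ℕ → Sh)
  (frob : ∀ (D : Div) (e : ℕ), O ⟶ FD D e)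
  (iter : ∀ e : ℕ, FD zero 1 ⟶ FD zero e)
  (frob_iter : ∀ e : ℕ, frob zero e = frob zero 1 ≫ iter e)
  (normal : Prop)
  (projective : Prop)

attribute [instance] FrobVariety.cat

/-- `X` is stably Frobenius `D`-split: `O_X → F^e_*O_X(D)` splits for some `e > 0`. -/
def FrobVariety.StablyDSplit (X : FrobVariety) (D : X.Div) : Prop :=
  ∃ e : ℕ, 0 < e ∧ IsSplitMor (X.frob D e)

/-- `X` is globally F-regular: stably Frobenius `D`-split for every effective (Weil) divisor. -/
def FrobVariety.GloballyFRegular (X : FrobVariety) : Prop :=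
  ∀ D : X.Div, X.eff D → X.StablyDSplit D

/-- `X` is F-split: the natural map `O_X → F_*O_X` splits. -/
def FrobVariety.FSplit (X : FrobVariety) : Prop :=
  IsSplitMor (X.frob X.zero 1)

/-- Abstract data of a morphism of varieties `f : X → Y` over a perfect field of
positive characteristic, at the level of the Frobenius geometry. -/
structure FrobMorphism (X Y : FrobVariety) where
  (pf : X.Sh ⥤ Y.Sh)                         -- the pushforward f_*
  (unit : Y.O ⟶ pf.obj X.O)                  -- the natural map O_Y → f_*O_X
  (pull : Y.Div → X.Div)                      -- pullback of divisors f^*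
  (pull_eff : ∀ D, Y.eff D → X.eff (pull D))
  (cmp : ∀ (D : Y.Div) (e : ℕ), Y.FD D e ⟶ pf.obj (X.FD (pull D) e))
  (cmp_comm : ∀ (D : Y.Div) (e : ℕ),
      Y.frob D e ≫ cmp D e = unit ≫ pf.map (X.frob (pull D) e))

theorem isSplitMor_iff_isSplitMono {C : Type u} [Category C] {A B : C} (u : A ⟶ B) :
    IsSplitMor u ↔ IsSplitMono u :=
  ⟨fun ⟨r, hr⟩ => IsSplitMono.mk' ⟨r, hr⟩, fun _ => ⟨retraction u, IsSplitMono.id u⟩⟩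

theorem CategoryTheory.IsSplitMono.of_comp {C : Type u} [Category C] {A B E : C}
    (u : A ⟶ B) (v : B ⟶ E) [IsSplitMono (u ≫ v)] : IsSplitMono u :=
  IsSplitMono.mk' ⟨v ≫ retraction (u ≫ v), by rw [← Category.assoc, IsSplitMono.id]⟩

namespace FrobMorphism

variable {X Y : FrobVariety} (f : FrobMorphism X Y)

/-- By `cmp_comm`, following `O_Y → F^e_*O_Y(D)` with `cmp` gives the composite of split maps
`O_Y → f_*O_X → f_*F^e_*O_X(f^*D)`. -/
theorem isSplitMono_frob [IsSplitMono f.unit] (D : Y.Div) (e : ℕ)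
    [IsSplitMono (X.frob (f.pull D) e)] : IsSplitMono (Y.frob D e) := by
  have : IsSplitMono (Y.frob D e ≫ f.cmp D e) := by
    rw [f.cmp_comm]
    infer_instance
  exact IsSplitMono.of_comp _ (f.cmp D e)

theorem stablyDSplit_of_pull (hsplit : IsSplitMor f.unit) {D : Y.Div}
    (hD : X.StablyDSplit (f.pull D)) : Y.StablyDSplit D := by
  obtain ⟨e, he, hfrob⟩ := hD
  rw [isSplitMor_iff_isSplitMono] at hsplit hfrob
  exact ⟨e, he, (isSplitMor_iff_isSplitMono _).2 (f.isSplitMono_frob D e)⟩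

end FrobMorphism

/-- Lemma 2.3 (first part): if O_Y → f_*O_X splits and X is globally F-regular,
then Y is stably Frobenius D-split for every effective Cartier divisor D. -/
theorem stably_split_descends_for_cartier (X Y : FrobVariety) (f : FrobMorphism X Y)
    (hsplit : IsSplitMor f.unit) (hX : X.GloballyFRegular) :
    ∀ D : Y.Div, Y.eff D → Y.cartier D → Y.StablyDSplit D := by
  intro D hD _
  exact f.stablyDSplit_of_pull hsplit (hX (f.pull D) (f.pull_eff D hD))
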